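/- arXiv:2001.03222 — 3 statements merged into one kernel-verified Lean document; each statement's English description precedes it below -/
import Mathlib

section
/- Let g be a monic polynomial of degree e > 0 over F_q and let d be a positive integer with d < e. Let λ*_i denote the number of distinct monic irreducible factors of g of degree i, and suppose k ≤ d is the least integer with λ*_k > 0. Then the number N of monic polynomials f of degree d with gcd(g, f) ≠ 1 satisfies λ*_k · q^(d-k) − C(λ*_k, 2) · q^(max(d−2k, 0)) ≤ N ≤ λ*_k · q^(d-k) + Σ_{i=k+1}^{d} λ*_i · q^(d-i). -/
/-!
A monic `f` fails to be coprime to `g` exactly when some monic irreducible factor `p` of `g`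
divides it, and the monic multiples of `p` of degree `d` are the `p * h` with `h` monic of degree
`d - deg p`: there are `q ^ (d - deg p)` of them. The union bound over the factors of degree at
most `d` gives the upper bound. For the lower bound, keep only the `λ*_k` factors of degree `k`
and apply the Bonferroni inequality: distinct irreducible factors are coprime, so their common
multiples are the multiples of their product, of which there are at most `q ^ (d - 2k)`.
-/

open Polynomial Finset UniqueFactorizationMonoid

theorem Finset.sum_card_le_card_biUnion_add {α β : Type*} [DecidableEq β] (s : Finset α)
    (f : α → Finset β) (c : ℕ) (h : (s : Set α).Pairwise fun a b => #(f a ∩ f b) ≤ c) :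
    ∑ a ∈ s, #(f a) ≤ #(s.biUnion f) + (#s).choose 2 * c := by
  classical
  induction s using Finset.induction_on with
  | empty => simp
  | insert a s ha ih =>
    have hs : (s : Set α).Pairwise fun a b => #(f a ∩ f b) ≤ c :=
      h.mono (by simp [Set.subset_insert])
    have hinter : #(f a ∩ s.biUnion f) ≤ #s * c := by
      rw [inter_biUnion]
      refine card_biUnion_le_card_mul _ _ _ fun b hb => h (by simp) (by simp [hb]) ?_
      rintro rfl
      exact ha hb
    have hunion := card_union_add_card_inter (f a) (s.biUnion f)
    rw [sum_insert ha, biUnion_insert, card_insert_of_notMem ha, Nat.choose_succ_succ',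
      Nat.choose_one_right]
    have := ih hs
    linarith

theorem not_isCoprime_iff_exists_mem_normalizedFactors_dvd {R : Type*} [CommRing R] [IsDomain R]
    [IsPrincipalIdealRing R] [NormalizationMonoid R] {a b : R} (ha : a ≠ 0) :
    ¬IsCoprime a b ↔ ∃ p ∈ normalizedFactors a, p ∣ b := by
  constructor
  · intro hab
    by_contra! H
    refine hab (isCoprime_of_prime_dvd (fun h => ha h.1) fun z hz hza hzb => ?_)
    obtain ⟨p, hp, hzp⟩ := exists_mem_normalizedFactors_of_dvd ha hz.irreducible hza
    exact H p hp (hzp.dvd_iff_dvd_left.mp hzb)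
  · rintro ⟨p, hp, hpb⟩ hab
    exact (prime_of_normalized_factor p hp).not_isUnit
      (hab.isUnit_of_dvd' (dvd_of_mem_normalizedFactors hp) hpb)

theorem filter_not_isCoprime_eq_biUnion {R : Type*} [CommRing R] [IsDomain R]
    [IsPrincipalIdealRing R] [NormalizationMonoid R] [DecidableEq R]
    [DecidableRel (α := R) (· ∣ ·)] {a : R} [DecidablePred (¬IsCoprime a ·)] (ha : a ≠ 0)
    (s : Finset R) :
    {b ∈ s | ¬IsCoprime a b} = (normalizedFactors a).toFinset.biUnion fun p => {b ∈ s | p ∣ b} := by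
  ext b
  simp only [mem_filter, mem_biUnion, Multiset.mem_toFinset,
    not_isCoprime_iff_exists_mem_normalizedFactors_dvd ha]
  aesop

namespace Polynomial

section MonicOfDegree

variable (R : Type*) [CommRing R] [Nontrivial R] [Fintype R]

theorem finite_setOf_monic_natDegree_eq (n : ℕ) :
    {p : R[X] | p.Monic ∧ p.natDegree = n}.Finite :=
  Set.finite_coe_iff.mp <|
    .of_equiv _ ((monicEquivDegreeLT n).trans (degreeLTEquiv R n).toEquiv).symm

noncomputable def monicOfDegree (n : ℕ) : Finset R[X] :=
  (finite_setOf_monic_natDegree_eq R n).toFinset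

variable {R}

@[simp]
theorem mem_monicOfDegree {n : ℕ} {f : R[X]} :
    f ∈ monicOfDegree R n ↔ f.Monic ∧ f.natDegree = n :=
  Set.Finite.mem_toFinset _

theorem card_monicOfDegree (n : ℕ) : #(monicOfDegree R n) = Fintype.card R ^ n := by
  rw [monicOfDegree, ← Nat.card_eq_card_finite_toFinset]
  exact (Nat.card_congr ((monicEquivDegreeLT n).trans (degreeLTEquiv R n).toEquiv)).trans (by simp)

variable {p : R[X]} {n : ℕ} [DecidablePred (p ∣ ·)]

theorem card_monicOfDegree_filter_dvd (hp : p.Monic) (hpn : p.natDegree ≤ n) :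
    #{f ∈ monicOfDegree R n | p ∣ f} = Fintype.card R ^ (n - p.natDegree) := by
  rw [← card_monicOfDegree (n - p.natDegree)]
  symm
  refine card_bij (fun h _ => p * h) (fun h hh => ?_) (fun _ _ _ _ => (hp.isRegular.left ·))
    fun f hf => ?_
  · rw [mem_monicOfDegree] at hh
    simp only [mem_filter, mem_monicOfDegree, dvd_mul_right, and_true]
    exact ⟨hp.mul hh.1, by rw [hp.natDegree_mul hh.1, hh.2]; omega⟩
  · simp only [mem_filter, mem_monicOfDegree] at hf
    obtain ⟨⟨hfm, hfn⟩, h, rfl⟩ := hf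
    have hh : h.Monic := hp.of_mul_monic_left hfm
    rw [hp.natDegree_mul hh] at hfn
    exact ⟨h, mem_monicOfDegree.mpr ⟨hh, by omega⟩, rfl⟩

theorem monicOfDegree_filter_dvd_eq_empty (hp : p.Monic) (hnp : n < p.natDegree) :
    {f ∈ monicOfDegree R n | p ∣ f} = ∅ := by
  refine filter_eq_empty_iff.mpr fun f hf ⟨h, hfh⟩ => ?_
  rw [mem_monicOfDegree, hfh] at hf
  have hh : h ≠ 0 := by rintro rfl; simpa using hf.1.ne_zero
  rw [hp.natDegree_mul' hh] at hf
  omega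

theorem card_monicOfDegree_filter_dvd_le (hp : p.Monic) :
    #{f ∈ monicOfDegree R n | p ∣ f} ≤ Fintype.card R ^ (n - p.natDegree) := by
  rcases le_or_gt p.natDegree n with hpn | hnp
  · exact (card_monicOfDegree_filter_dvd hp hpn).le
  · simp [monicOfDegree_filter_dvd_eq_empty hp hnp]

theorem card_biUnion_monicOfDegree_filter_dvd_le [DecidableEq R]
    [DecidableRel (α := R[X]) (· ∣ ·)] {P : Finset R[X]} {k d : ℕ}
    (hP : ∀ p ∈ P, p.Monic ∧ k ≤ p.natDegree) :
    #(P.biUnion fun p => {f ∈ monicOfDegree R d | p ∣ f}) ≤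
      ∑ i ∈ Icc k d, #{p ∈ P | p.natDegree = i} * Fintype.card R ^ (d - i) := by
  calc _ ≤ ∑ p ∈ P, #{f ∈ monicOfDegree R d | p ∣ f} := card_biUnion_le
    _ = ∑ p ∈ P with p.natDegree ∈ Icc k d, #{f ∈ monicOfDegree R d | p ∣ f} := by
        refine (sum_filter_of_ne fun p hp hne => mem_Icc.mpr ⟨(hP p hp).2, ?_⟩).symm
        by_contra! hdp
        simp [monicOfDegree_filter_dvd_eq_empty (hP p hp).1 hdp] at hne
    _ = ∑ i ∈ Icc k d, ∑ p ∈ P with p.natDegree = i, #{f ∈ monicOfDegree R d | p ∣ f} :=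
        (sum_fiberwise_eq_sum_filter _ _ _ _).symm
    _ = _ := sum_congr rfl fun i hi => sum_const_nat fun p hp => by
        obtain ⟨hpP, rfl⟩ := mem_filter.mp hp
        exact card_monicOfDegree_filter_dvd (hP p hpP).1 (mem_Icc.mp hi).2

end MonicOfDegree

section Field

variable {F : Type*} [Field F] [Fintype F] [DecidableEq F] [DecidableRel (α := F[X]) (· ∣ ·)]

theorem natCard_monic_not_isCoprime_eq_card_biUnion {g : F[X]} (hg : g ≠ 0) (d : ℕ) :
    Nat.card {f : F[X] // f.Monic ∧ f.natDegree = d ∧ ¬IsCoprime g f} =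
      #((normalizedFactors g).toFinset.biUnion fun p => {f ∈ monicOfDegree F d | p ∣ f}) := by
  classical
  rw [← filter_not_isCoprime_eq_biUnion hg, ← Nat.card_eq_finsetCard]
  exact Nat.card_congr (.subtypeEquivRight fun f => by simp [and_assoc])

theorem card_monicOfDegree_filter_dvd_inter_le {p p' : F[X]} (hp : p.Monic) (hp' : p'.Monic)
    (hpi : Irreducible p) (hp'i : Irreducible p') (hne : p ≠ p') (n : ℕ) :
    #({f ∈ monicOfDegree F n | p ∣ f} ∩ {f ∈ monicOfDegree F n | p' ∣ f}) ≤
      Fintype.card F ^ (n - (p.natDegree + p'.natDegree)) := by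
  have hcop : IsCoprime p p' := hpi.coprime_iff_not_dvd.mpr fun h =>
    hne (eq_of_monic_of_associated hp hp' (hpi.associated_of_dvd hp'i h))
  calc _ ≤ #{f ∈ monicOfDegree F n | p * p' ∣ f} := by
        refine card_le_card fun f hf => ?_
        simp only [mem_inter, mem_filter] at hf ⊢
        exact ⟨hf.1.1, hcop.mul_dvd hf.1.2 hf.2.2⟩
    _ ≤ _ := by
        simpa only [hp.natDegree_mul hp'] using card_monicOfDegree_filter_dvd_le (hp.mul hp')

theorem card_mul_pow_le_card_biUnion_add {P : Finset F[X]} {k d : ℕ}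
    (hP : ∀ p ∈ P, p.Monic ∧ Irreducible p ∧ p.natDegree = k) (hkd : k ≤ d) :
    #P * Fintype.card F ^ (d - k) ≤
      #(P.biUnion fun p => {f ∈ monicOfDegree F d | p ∣ f}) +
        (#P).choose 2 * Fintype.card F ^ (d - 2 * k) := by
  have hpair : (P : Set F[X]).Pairwise fun p p' =>
      #({f ∈ monicOfDegree F d | p ∣ f} ∩ {f ∈ monicOfDegree F d | p' ∣ f}) ≤
        Fintype.card F ^ (d - 2 * k) := fun p hp p' hp' hne => by
    obtain ⟨hpm, hpi, hpk⟩ := hP p hp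
    obtain ⟨hp'm, hp'i, hp'k⟩ := hP p' hp'
    simpa only [hpk, hp'k, two_mul] using
      card_monicOfDegree_filter_dvd_inter_le hpm hp'm hpi hp'i hne d
  have hcard : ∀ p ∈ P, #{f ∈ monicOfDegree F d | p ∣ f} = Fintype.card F ^ (d - k) :=
    fun p hp => by
      obtain ⟨hpm, -, hpk⟩ := hP p hp
      rw [card_monicOfDegree_filter_dvd hpm (hpk ▸ hkd), hpk]
  simpa only [sum_const_nat hcard] using sum_card_le_card_biUnion_add P _ _ hpair

end Field

end Polynomial

open UniqueFactorizationMonoid in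
theorem count_not_coprime_bounds_general {F : Type*} [Field F] [Fintype F] [DecidableEq F]
    (q d k : ℕ) (hq : Fintype.card F = q)
    (g : Polynomial F) (hgm : g.Monic)
    (lam : ℕ → ℕ)
    (hlam : ∀ i, lam i =
      ((normalizedFactors g).toFinset.filter (fun p => p.natDegree = i)).card)
    (hkd : k ≤ d) (hkleast : ∀ j, 0 < lam j → k ≤ j) :
    (lam k : ℤ) * q ^ (d - k) - (lam k).choose 2 * q ^ (max (d - 2 * k) 0)
        ≤ (Nat.card {f : Polynomial F // f.Monic ∧ f.natDegree = d ∧ ¬ IsCoprime g f} : ℤ) ∧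
      (Nat.card {f : Polynomial F // f.Monic ∧ f.natDegree = d ∧ ¬ IsCoprime g f} : ℤ)
        ≤ (lam k : ℤ) * q ^ (d - k) + ∑ i ∈ Finset.Icc (k + 1) d, (lam i : ℤ) * q ^ (d - i) := by
  classical
  subst hq
  have hg : g ≠ 0 := hgm.ne_zero
  set P := (normalizedFactors g).toFinset
  have hfactor (p) (hp : p ∈ P) : p.Monic ∧ Irreducible p := by
    obtain ⟨hirr, hmon, -⟩ :=
      (Polynomial.mem_normalizedFactors_iff hg).mp (Multiset.mem_toFinset.mp hp)
    exact ⟨hmon, hirr⟩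
  have hlower := card_mul_pow_le_card_biUnion_add (P := {p ∈ P | p.natDegree = k})
    (fun p hp => let ⟨hpP, hpk⟩ := mem_filter.mp hp; ⟨(hfactor p hpP).1, (hfactor p hpP).2, hpk⟩)
    hkd
  have hsub := card_le_card (biUnion_subset_biUnion_of_subset_left
    (fun p => {f ∈ monicOfDegree F d | p ∣ f}) (filter_subset (·.natDegree = k) P))
  have hupper := card_biUnion_monicOfDegree_filter_dvd_le (d := d) (P := P) fun p hp =>
    ⟨(hfactor p hp).1, hkleast _ (hlam _ ▸ card_pos.mpr ⟨p, mem_filter.mpr ⟨hp, rfl⟩⟩)⟩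
  rw [← add_sum_Ioc_eq_sum_Icc hkd, ← Icc_add_one_left_eq_Ioc] at hupper
  simp only [← hlam] at hlower hupper
  rw [natCard_monic_not_isCoprime_eq_card_biUnion hg, max_eq_left (Nat.zero_le _)]
  constructor
  · linarith
  · exact_mod_cast hupper

open UniqueFactorizationMonoid in
/-- Bounds on the number `N` of monic polynomials `f` of degree `d` with
`gcd(g,f) ≠ 1`, where `g` is monic of degree `e > d`, `λ*_i` is the number of distinct
monic irreducible factors of `g` of degree `i`, and `k ≤ d` is the least index with
`λ*_k > 0`. -/
theorem count_not_coprime_bounds {F : Type*} [Field F] [Fintype F] [DecidableEq F]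
    (q e d k : ℕ) (hq : Fintype.card F = q)
    (g : Polynomial F) (hgm : g.Monic) (hge : g.natDegree = e) (hd : 0 < d) (hde : d < e)
    (lam : ℕ → ℕ)
    (hlam : ∀ i, lam i =
      ((normalizedFactors g).toFinset.filter (fun p => p.natDegree = i)).card)
    (hk : 0 < lam k) (hkd : k ≤ d) (hkleast : ∀ j, 0 < lam j → k ≤ j) :
    (lam k : ℤ) * q ^ (d - k) - (lam k).choose 2 * q ^ (max (d - 2 * k) 0)
        ≤ (Nat.card {f : Polynomial F // f.Monic ∧ f.natDegree = d ∧ ¬ IsCoprime g f} : ℤ) ∧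
      (Nat.card {f : Polynomial F // f.Monic ∧ f.natDegree = d ∧ ¬ IsCoprime g f} : ℤ)
        ≤ (lam k : ℤ) * q ^ (d - k) + ∑ i ∈ Finset.Icc (k + 1) d, (lam i : ℤ) * q ^ (d - i) :=
  count_not_coprime_bounds_general q d k hq g hgm lam hlam hkd hkleast
end

section
/- Let g be a monic polynomial of degree e over F_q, d a positive integer with d < e, λ*_i the number of distinct monic irreducible factors of g of degree i, and k ≤ d the least integer with λ*_k > 0. Then the probability P₀ that a uniformly random monic polynomial f of degree d satisfies gcd(g, f) = 1 is bounded by: 1 − λ*_k/q^k − Σ_{i=k+1}^{d} λ*_i/q^i ≤ P₀ ≤ 1 − λ*_k/q^k + C(λ*_k, 2)/q^(min(2k, d)). -/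
/-!
Let `P` be the monic irreducible factors of `g` and `M p` the monic multiples of `p` of degree
`d`; `M p` has `q ^ (d - deg p)` elements if `deg p ≤ d` and none otherwise. A monic `f` of
degree `d` fails to be coprime to `g` exactly when it lies in some `M p`, so the union bound over
all of `P` gives the lower bound. For the upper bound only the `λ*_k` factors of least degree `k`
are removed, using the second Bonferroni inequality: distinct factors are coprime, so
`M p ∩ M p' = M (p * p')`, which has at most `q ^ (d - min (2k) d)` elements.
-/

open Polynomial UniqueFactorizationMonoid Finset

theorem Finset.sum_ncard_le_ncard_biUnion_add_choose_two_mul {α ι : Type*} (s : Finset ι)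
    (A : ι → Set α) (hA : ∀ i ∈ s, (A i).Finite) {t : ℕ}
    (ht : ∀ i ∈ s, ∀ j ∈ s, i ≠ j → (A i ∩ A j).ncard ≤ t) :
    ∑ i ∈ s, (A i).ncard ≤ (⋃ i ∈ s, A i).ncard + (#s).choose 2 * t := by
  classical
  induction s using Finset.induction_on with
  | empty => simp
  | @insert x s hx ih =>
    simp only [Finset.mem_insert, forall_eq_or_imp] at hA ht
    have hU : (⋃ i ∈ s, A i).Finite := s.finite_toSet.biUnion hA.2
    have hinter : (A x ∩ ⋃ i ∈ s, A i).ncard ≤ #s * t := by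
      rw [Set.inter_iUnion₂]
      refine (s.set_ncard_biUnion_le _).trans ?_
      simpa using Finset.sum_le_sum fun i hi ↦ ht.1.2 i hi (ne_of_mem_of_not_mem hi hx).symm
    have hunion := Set.ncard_union_add_ncard_inter (A x) _ hA.1 hU
    have hIH := ih hA.2 fun i hi j hj ↦ ht.2 i hi |>.2 j hj
    rw [Finset.sum_insert hx, Finset.set_biUnion_insert, Finset.card_insert_of_notMem hx,
      Nat.choose_succ_succ', Nat.choose_one_right]
    nlinarith

namespace Polynomial

variable {R : Type*} [CommRing R]

def monicMultiples (h : R[X]) (n : ℕ) : Set R[X] := {f | f.Monic ∧ f.natDegree = n ∧ h ∣ f}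

theorem monicMultiples_inter_of_isCoprime {n : ℕ} {p q : R[X]} (hpq : IsCoprime p q) :
    monicMultiples p n ∩ monicMultiples q n = monicMultiples (p * q) n := by
  ext f
  constructor
  · rintro ⟨⟨hfm, hfn, hp⟩, -, -, hq⟩
    exact ⟨hfm, hfn, hpq.mul_dvd hp hq⟩
  · rintro ⟨hfm, hfn, hpq⟩
    exact ⟨⟨hfm, hfn, dvd_of_mul_right_dvd hpq⟩, hfm, hfn, dvd_of_mul_left_dvd hpq⟩

variable [Nontrivial R]

theorem natCard_monic_natDegree_eq [Fintype R] (n : ℕ) :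
    Nat.card {f : R[X] // f.Monic ∧ f.natDegree = n} = Fintype.card R ^ n := by
  rw [Nat.card_congr ((monicEquivDegreeLT n).trans (degreeLTEquiv R n).toEquiv),
    Nat.card_eq_fintype_card, Fintype.card_fun, Fintype.card_fin]

theorem ncard_setOf_monic_natDegree_eq [Fintype R] (n : ℕ) :
    {f : R[X] | f.Monic ∧ f.natDegree = n}.ncard = Fintype.card R ^ n :=
  (Nat.card_coe_set_eq _).symm.trans (natCard_monic_natDegree_eq n)

theorem finite_setOf_monic_natDegree_eq_s4 [Finite R] (n : ℕ) :
    {f : R[X] | f.Monic ∧ f.natDegree = n}.Finite :=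
  Set.finite_coe_iff.1 <|
    Finite.of_equiv _ ((monicEquivDegreeLT n).trans (degreeLTEquiv R n).toEquiv).symm

theorem finite_monicMultiples [Finite R] (h : R[X]) (n : ℕ) : (monicMultiples h n).Finite :=
  (finite_setOf_monic_natDegree_eq_s4 n).subset fun _ hf ↦ ⟨hf.1, hf.2.1⟩

variable {h : R[X]} {n : ℕ}

theorem monicMultiples_eq_empty (hh : h.Monic) (hn : n < h.natDegree) :
    monicMultiples h n = ∅ := by
  refine Set.eq_empty_of_forall_notMem ?_
  rintro f ⟨hfm, rfl, u, rfl⟩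
  rw [hh.natDegree_mul' (hh.of_mul_monic_left hfm).ne_zero] at hn
  omega

noncomputable def monicMultiplesEquiv (hh : h.Monic) (hn : h.natDegree ≤ n) :
    {u : R[X] // u.Monic ∧ u.natDegree = n - h.natDegree} ≃ monicMultiples h n :=
  Equiv.ofBijective
    (fun u ↦ ⟨h * u, hh.mul u.2.1, by rw [hh.natDegree_mul u.2.1, u.2.2]; omega,
      dvd_mul_right h u⟩)
    ⟨fun u v huv ↦ Subtype.ext <| hh.isRegular.left (congrArg Subtype.val huv),
      by
        rintro ⟨f, hfm, rfl, u, rfl⟩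
        have hu := hh.of_mul_monic_left hfm
        exact ⟨⟨u, hu, by rw [hh.natDegree_mul hu]; omega⟩, rfl⟩⟩

theorem ncard_monicMultiples [Fintype R] (hh : h.Monic) (hn : h.natDegree ≤ n) :
    (monicMultiples h n).ncard = Fintype.card R ^ (n - h.natDegree) := by
  rw [← Nat.card_coe_set_eq, ← Nat.card_congr (monicMultiplesEquiv hh hn),
    natCard_monic_natDegree_eq]

theorem ncard_monicMultiples_le [Fintype R] (hh : h.Monic) :
    (monicMultiples h n).ncard ≤ Fintype.card R ^ (n - h.natDegree) := by
  rcases le_or_gt h.natDegree n with hn | hn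
  · exact (ncard_monicMultiples hh hn).le
  · simp [monicMultiples_eq_empty hh hn]

theorem sum_ncard_monicMultiples_eq [Fintype R] {P : Finset R[X]} (hP : ∀ p ∈ P, p.Monic)
    {k : ℕ} (hk : ∀ p ∈ P, k ≤ p.natDegree) (d : ℕ) :
    ∑ p ∈ P, (monicMultiples p d).ncard =
      ∑ i ∈ Icc k d, #{p ∈ P | p.natDegree = i} * Fintype.card R ^ (d - i) := by
  calc ∑ p ∈ P, (monicMultiples p d).ncard
      = ∑ p ∈ P with p.natDegree ∈ Icc k d, (monicMultiples p d).ncard := by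
        refine (Finset.sum_filter_of_ne fun p hp hne ↦ Finset.mem_Icc.2 ⟨hk p hp, ?_⟩).symm
        by_contra! hdeg
        exact hne (by rw [monicMultiples_eq_empty (hP p hp) hdeg, Set.ncard_empty])
    _ = ∑ p ∈ P with p.natDegree ∈ Icc k d, Fintype.card R ^ (d - p.natDegree) :=
        Finset.sum_congr rfl fun p hp ↦ by
          rw [Finset.mem_filter, Finset.mem_Icc] at hp
          exact ncard_monicMultiples (hP p hp.1) hp.2.2
    _ = ∑ i ∈ Icc k d, ∑ p ∈ P with p.natDegree = i,
          Fintype.card R ^ (d - p.natDegree) :=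
        (Finset.sum_fiberwise_eq_sum_filter _ _ _ _).symm
    _ = _ := Finset.sum_congr rfl fun i _ ↦ by
        rw [Finset.sum_congr rfl fun p hp ↦ by rw [(Finset.mem_filter.1 hp).2], Finset.sum_const,
          smul_eq_mul]

theorem card_mul_pow_le_ncard_biUnion_monicMultiples_add [Fintype R] {s : Finset R[X]} {k d : ℕ}
    (hmonic : ∀ p ∈ s, p.Monic) (hdeg : ∀ p ∈ s, p.natDegree = k)
    (hcop : (s : Set R[X]).Pairwise IsCoprime) (hkd : k ≤ d) :
    #s * Fintype.card R ^ (d - k) ≤ (⋃ p ∈ s, monicMultiples p d).ncard +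
      (#s).choose 2 * Fintype.card R ^ (d - min (2 * k) d) := by
  have hsum : ∑ p ∈ s, (monicMultiples p d).ncard = #s * Fintype.card R ^ (d - k) := by
    rw [Finset.sum_congr rfl fun p hp ↦ by
      rw [ncard_monicMultiples (hmonic p hp) (hdeg p hp ▸ hkd), hdeg p hp], Finset.sum_const,
      smul_eq_mul]
  rw [← hsum]
  refine s.sum_ncard_le_ncard_biUnion_add_choose_two_mul _ (fun p _ ↦ finite_monicMultiples p d)
    fun p hp p' hp' hne ↦ ?_
  have hdeg2 : (p * p').natDegree = 2 * k := by
    rw [(hmonic p hp).natDegree_mul (hmonic p' hp'), hdeg p hp, hdeg p' hp', two_mul]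
  rw [monicMultiples_inter_of_isCoprime (hcop hp hp' hne)]
  refine (ncard_monicMultiples_le ((hmonic p hp).mul (hmonic p' hp'))).trans_eq ?_
  rw [hdeg2]
  -- if `d < 2 * k` both exponents truncate to `0`
  congr 1
  omega

theorem ncard_isCoprime_add_ncard_biUnion_monicMultiples_le [Fintype R] {g : R[X]} {s : Finset R[X]}
    (hs : ∀ p ∈ s, ¬IsUnit p ∧ p ∣ g) (d : ℕ) :
    {f : R[X] | f.Monic ∧ f.natDegree = d ∧ IsCoprime g f}.ncard +
      (⋃ p ∈ s, monicMultiples p d).ncard ≤ Fintype.card R ^ d := by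
  have hdisj : Disjoint {f : R[X] | f.Monic ∧ f.natDegree = d ∧ IsCoprime g f}
      (⋃ p ∈ s, monicMultiples p d) := by
    refine Set.disjoint_left.2 fun f ⟨_, _, hgf⟩ hf ↦ ?_
    obtain ⟨p, hp, -, -, hpf⟩ := Set.mem_iUnion₂.1 hf
    exact (hs p hp).1 (hgf.isUnit_of_dvd' (hs p hp).2 hpf)
  have hmonic := finite_setOf_monic_natDegree_eq_s4 (R := R) d
  rw [← Set.ncard_union_eq hdisj (hmonic.subset fun _ hf ↦ ⟨hf.1, hf.2.1⟩)
    (s.finite_toSet.biUnion fun p _ ↦ finite_monicMultiples p d),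
    ← ncard_setOf_monic_natDegree_eq]
  refine Set.ncard_le_ncard ?_ hmonic
  rintro f (⟨hfm, hfd, -⟩ | hf)
  · exact ⟨hfm, hfd⟩
  · obtain ⟨p, -, hfm, hfd, -⟩ := Set.mem_iUnion₂.1 hf
    exact ⟨hfm, hfd⟩

end Polynomial

section PrincipalIdealRing

variable {R : Type*} [CommRing R] [IsDomain R] [IsPrincipalIdealRing R] [NormalizationMonoid R]

theorem exists_mem_normalizedFactors_dvd_of_not_isCoprime {a b : R} (ha : a ≠ 0)
    (hab : ¬IsCoprime a b) : ∃ p ∈ normalizedFactors a, p ∣ b := by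
  obtain ⟨z, hz, hza, hzb⟩ : ∃ z, Irreducible z ∧ z ∣ a ∧ z ∣ b := by
    by_contra! h
    exact hab (isCoprime_of_irreducible_dvd (fun h0 ↦ ha h0.1) h)
  obtain ⟨p, hp, hzp⟩ := exists_mem_normalizedFactors_of_dvd ha hz hza
  exact ⟨p, hp, hzp.symm.dvd.trans hzb⟩

theorem isCoprime_of_mem_normalizedFactors {a p q : R} (hp : p ∈ normalizedFactors a)
    (hq : q ∈ normalizedFactors a) (hpq : p ≠ q) : IsCoprime p q := by
  refine (irreducible_of_normalized_factor p hp).coprime_iff_not_dvd.2 fun hdvd ↦ hpq ?_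
  exact (((irreducible_of_normalized_factor p hp).dvd_irreducible_iff_associated
    (irreducible_of_normalized_factor q hq)).1 hdvd).eq_of_normalized
    (normalize_normalized_factor p hp) (normalize_normalized_factor q hq)

end PrincipalIdealRing

section FiniteField

variable {F : Type*} [Field F] [Fintype F] [DecidableEq F] {g : F[X]}

theorem card_pow_le_ncard_isCoprime_add_sum_ncard_monicMultiples (hg : g ≠ 0) (d : ℕ) :
    Fintype.card F ^ d ≤ {f : F[X] | f.Monic ∧ f.natDegree = d ∧ IsCoprime g f}.ncard +
      ∑ p ∈ (normalizedFactors g).toFinset, (monicMultiples p d).ncard := by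
  set P := (normalizedFactors g).toFinset
  have hcover : {f : F[X] | f.Monic ∧ f.natDegree = d} ⊆
      {f | f.Monic ∧ f.natDegree = d ∧ IsCoprime g f} ∪ ⋃ p ∈ P, monicMultiples p d := by
    rintro f ⟨hfm, hfd⟩
    by_cases hgf : IsCoprime g f
    · exact Or.inl ⟨hfm, hfd, hgf⟩
    · obtain ⟨p, hp, hpf⟩ := exists_mem_normalizedFactors_dvd_of_not_isCoprime hg hgf
      exact Or.inr (Set.mem_biUnion (Multiset.mem_toFinset.2 hp) ⟨hfm, hfd, hpf⟩)
  calc Fintype.card F ^ d = {f : F[X] | f.Monic ∧ f.natDegree = d}.ncard :=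
        (ncard_setOf_monic_natDegree_eq d).symm
    _ ≤ ({f | f.Monic ∧ f.natDegree = d ∧ IsCoprime g f} ∪
          ⋃ p ∈ P, monicMultiples p d).ncard :=
        Set.ncard_le_ncard hcover <|
          ((finite_setOf_monic_natDegree_eq_s4 d).subset fun _ hf ↦ ⟨hf.1, hf.2.1⟩).union <|
            P.finite_toSet.biUnion fun p _ ↦ finite_monicMultiples p d
    _ ≤ _ := (Set.ncard_union_le _ _).trans (Nat.add_le_add_left (P.set_ncard_biUnion_le _) _)

end FiniteField

theorem one_sub_sum_div_pow_le_div {q N k d : ℕ} {l : ℕ → ℕ} (hq : 0 < q) (hkd : k ≤ d)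
    (h : q ^ d ≤ N + ∑ i ∈ Icc k d, l i * q ^ (d - i)) :
    1 - (l k : ℝ) / q ^ k - ∑ i ∈ Icc (k + 1) d, (l i : ℝ) / q ^ i ≤
      (N : ℝ) / q ^ d := by
  have hq' : (0 : ℝ) < q := Nat.cast_pos.2 hq
  have hterm : ∀ i ∈ Icc k d, ((l i * q ^ (d - i) : ℕ) : ℝ) = l i / q ^ i * q ^ d :=
    fun i hi ↦ by
      push_cast
      rw [pow_sub₀ _ hq'.ne' (Finset.mem_Icc.1 hi).2]
      ring
  replace h : (q : ℝ) ^ d ≤ N + ∑ i ∈ Icc k d, ((l i * q ^ (d - i) : ℕ) : ℝ) := by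
    exact_mod_cast h
  rw [Finset.sum_congr rfl hterm, ← Finset.sum_mul, ← Finset.insert_Icc_add_one_left_eq_Icc hkd,
    Finset.sum_insert (by simp)] at h
  rw [le_div_iff₀ (pow_pos hq' d)]
  linarith

theorem div_le_one_sub_div_add_div {q N U a c k m d : ℕ} (hq : 0 < q) (hkd : k ≤ d)
    (hmd : m ≤ d) (hN : N + U ≤ q ^ d) (hU : a * q ^ (d - k) ≤ U + c * q ^ (d - m)) :
    (N : ℝ) / q ^ d ≤ 1 - (a : ℝ) / q ^ k + (c : ℝ) / q ^ m := by
  have hq' : (0 : ℝ) < q := Nat.cast_pos.2 hq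
  replace hN : (N : ℝ) + U ≤ q ^ d := by exact_mod_cast hN
  replace hU : (a : ℝ) * q ^ (d - k) ≤ U + c * q ^ (d - m) := by exact_mod_cast hU
  rw [pow_sub₀ _ hq'.ne' hkd, pow_sub₀ _ hq'.ne' hmd] at hU
  have hexpand : (1 - a / q ^ k + c / q ^ m) * (q : ℝ) ^ d =
      q ^ d - a * (q ^ d * ((q : ℝ) ^ k)⁻¹) + c * (q ^ d * ((q : ℝ) ^ m)⁻¹) := by
    ring
  rw [div_le_iff₀ (pow_pos hq' d), hexpand]
  linarith

open UniqueFactorizationMonoid in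
theorem prob_coprime_bounds_general {F : Type*} [Field F] [Fintype F] [DecidableEq F]
    (q d k : ℕ) (hq : Fintype.card F = q)
    (g : Polynomial F) (hgm : g.Monic)
    (lam : ℕ → ℕ)
    (hlam : ∀ i, lam i =
      ((normalizedFactors g).toFinset.filter (fun p => p.natDegree = i)).card)
    (hkd : k ≤ d) (hkleast : ∀ j, 0 < lam j → k ≤ j) :
    1 - (lam k : ℝ) / q ^ k - ∑ i ∈ Finset.Icc (k + 1) d, (lam i : ℝ) / q ^ i
        ≤ (Nat.card {f : Polynomial F // f.Monic ∧ f.natDegree = d ∧ IsCoprime g f} : ℝ) / q ^ d ∧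
      (Nat.card {f : Polynomial F // f.Monic ∧ f.natDegree = d ∧ IsCoprime g f} : ℝ) / q ^ d
        ≤ 1 - (lam k : ℝ) / q ^ k + ((lam k).choose 2 : ℝ) / q ^ (min (2 * k) d) := by
  subst hq
  have hg : g ≠ 0 := hgm.ne_zero
  set P := (normalizedFactors g).toFinset
  have hmemP : ∀ p ∈ P, Irreducible p ∧ p.Monic ∧ p ∣ g := fun p hp ↦
    (Polynomial.mem_normalizedFactors_iff hg).1 (Multiset.mem_toFinset.1 hp)
  have hkP : ∀ p ∈ P, k ≤ p.natDegree := fun p hp ↦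
    hkleast _ (hlam _ ▸ Finset.card_pos.2 ⟨p, Finset.mem_filter.2 ⟨hp, rfl⟩⟩)
  rw [show Nat.card {f : F[X] // f.Monic ∧ f.natDegree = d ∧ IsCoprime g f} =
    {f : F[X] | f.Monic ∧ f.natDegree = d ∧ IsCoprime g f}.ncard from Nat.card_coe_set_eq _]
  constructor
  · have hcount := card_pow_le_ncard_isCoprime_add_sum_ncard_monicMultiples hg d
    rw [sum_ncard_monicMultiples_eq (fun p hp ↦ (hmemP p hp).2.1) hkP] at hcount
    simp only [← hlam] at hcount
    exact one_sub_sum_div_pow_le_div Fintype.card_pos hkd hcount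
  · set Pk := P.filter (·.natDegree = k)
    have hPk : ∀ p ∈ Pk, p ∈ P ∧ p.natDegree = k := fun p hp ↦ Finset.mem_filter.1 hp
    have hcount := ncard_isCoprime_add_ncard_biUnion_monicMultiples_le (s := Pk)
      (fun p hp ↦ ⟨(hmemP p (hPk p hp).1).1.not_isUnit, (hmemP p (hPk p hp).1).2.2⟩) d
    have hbonf := card_mul_pow_le_ncard_biUnion_monicMultiples_add
      (fun p hp ↦ (hmemP p (hPk p hp).1).2.1) (fun p hp ↦ (hPk p hp).2)
      (fun p hp p' hp' ↦ isCoprime_of_mem_normalizedFactors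
        (Multiset.mem_toFinset.1 (hPk p hp).1) (Multiset.mem_toFinset.1 (hPk p' hp').1)) hkd
    rw [← hlam k] at hbonf
    exact div_le_one_sub_div_add_div Fintype.card_pos hkd (min_le_right _ _) hcount hbonf

open UniqueFactorizationMonoid in
/-- Bounds on the probability `P₀` that a uniformly random monic polynomial `f` of
degree `d` is coprime to a fixed monic `g` of degree `e > d`:
`1 - λ*_k/q^k - Σ_{i=k+1}^d λ*_i/q^i ≤ P₀ ≤ 1 - λ*_k/q^k + C(λ*_k,2)/q^(min(2k,d))`. -/
theorem prob_coprime_bounds {F : Type*} [Field F] [Fintype F] [DecidableEq F]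
    (q e d k : ℕ) (hq : Fintype.card F = q)
    (g : Polynomial F) (hgm : g.Monic) (hge : g.natDegree = e) (hd : 0 < d) (hde : d < e)
    (lam : ℕ → ℕ)
    (hlam : ∀ i, lam i =
      ((normalizedFactors g).toFinset.filter (fun p => p.natDegree = i)).card)
    (hk : 0 < lam k) (hkd : k ≤ d) (hkleast : ∀ j, 0 < lam j → k ≤ j) :
    1 - (lam k : ℝ) / q ^ k - ∑ i ∈ Finset.Icc (k + 1) d, (lam i : ℝ) / q ^ i
        ≤ (Nat.card {f : Polynomial F // f.Monic ∧ f.natDegree = d ∧ IsCoprime g f} : ℝ) / q ^ d ∧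
      (Nat.card {f : Polynomial F // f.Monic ∧ f.natDegree = d ∧ IsCoprime g f} : ℝ) / q ^ d
        ≤ 1 - (lam k : ℝ) / q ^ k + ((lam k).choose 2 : ℝ) / q ^ (min (2 * k) d) :=
  prob_coprime_bounds_general q d k hq g hgm lam hlam hkd hkleast
end

section
/- Let g be a monic polynomial of degree e over F_q with factorization pattern (λ₁, …, λ_e) (so g has λ_i irreducible factors of degree i counted with multiplicity), and let k be the least index with λ_k > 0. For any i with k ≤ i ≤ e, the number η_i of distinct monic divisors of g of degree i satisfies η_i ≤ [X^i] Π_{j=k}^{i} (1 + X^j)^{λ_j}, the coefficient of X^i in the indicated polynomial. -/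
/-!
A monic divisor of `g` is determined by its multiset of monic irreducible factors, which is a
sub-multiset of the factors of `g` with degrees summing to `i`; in particular only factors of
degree at most `i` occur. Expanding `∏ (1 + X ^ deg p)` over the factors `p` of `g` of degree at
most `i` counts exactly these sub-multisets (with multiplicity), and regrouping the factors by
degree turns this product into `∏_{j=k}^{i} (1 + X^j)^{λ_j}`.
-/

open Polynomial UniqueFactorizationMonoid

theorem Multiset.powerset_map {α β : Type*} (f : α → β) (s : Multiset α) :
    (s.map f).powerset = s.powerset.map (map f) := by
  induction s using Multiset.induction with
  | empty => simp
  | cons a s ih =>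
    simp only [map_cons, powerset_cons, ih, map_add, map_map]
    congr 1
    exact map_congr rfl fun t _ => by simp

theorem Finset.prod_multiset_map_count_of_subset {ι M : Type*} [DecidableEq ι] [CommMonoid M]
    (s : Multiset ι) (t : Finset ι) (hs : s.toFinset ⊆ t) (f : ι → M) :
    (s.map f).prod = ∏ i ∈ t, f i ^ s.count i := by
  rw [prod_multiset_map_count]
  refine prod_subset hs fun i _ hi => ?_
  rw [Multiset.count_eq_zero_of_notMem (by simpa using hi), pow_zero]

theorem Polynomial.coeff_multiset_prod_one_add_X_pow {R : Type*} [CommSemiring R]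
    (d : Multiset ℕ) (n : ℕ) :
    ((d.map fun j => (1 + X ^ j : R[X])).prod).coeff n
      = ((d.powerset.filter (·.sum = n)).card : R) := by
  induction d using Multiset.induction generalizing n with
  | empty =>
    rcases eq_or_ne n 0 with rfl | hn
    · simp [Multiset.filter_singleton]
    · simp [coeff_one, Multiset.filter_singleton, hn, hn.symm]
  | cons a d ih =>
    rw [Multiset.map_cons, Multiset.prod_cons, add_mul, one_mul, coeff_add, mul_comm,
      coeff_mul_X_pow', Multiset.powerset_cons, Multiset.filter_add, Multiset.filter_map,
      Multiset.card_add, Multiset.card_map, Nat.cast_add, ih]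
    congr 1
    split_ifs with han
    · rw [ih]
      congr 2
      exact Multiset.filter_congr fun t _ => by simp only [Function.comp, Multiset.sum_cons]; omega
    · rw [Multiset.filter_eq_nil.mpr fun t _ => by
        simp only [Function.comp, Multiset.sum_cons]; omega]
      simp

namespace Polynomial

variable {F : Type*} [Field F] [DecidableEq F]

theorem prod_normalizedFactors_of_monic {m : F[X]} (hm : m.Monic) :
    (normalizedFactors m).prod = m := by
  simpa [hm.leadingCoeff] using leadingCoeff_mul_prod_normalizedFactors m

theorem sum_natDegree_normalizedFactors_of_monic {m : F[X]} (hm : m.Monic) :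
    ((normalizedFactors m).map natDegree).sum = m.natDegree := by
  rw [← natDegree_multiset_prod_of_monic _ fun p hp =>
    ((Polynomial.mem_normalizedFactors_iff hm.ne_zero).mp hp).2.1,
    prod_normalizedFactors_of_monic hm]

theorem card_monic_dvd_natDegree_eq_le {g : F[X]} (hg : g ≠ 0) (i : ℕ) :
    Nat.card {m : F[X] // m.Monic ∧ m ∣ g ∧ m.natDegree = i} ≤
      Multiset.card ((((normalizedFactors g).map natDegree).filter (· ≤ i)).powerset.filter
        (·.sum = i)) := by
  set P := ((normalizedFactors g).filter (·.natDegree ≤ i)).powerset.filter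
    fun t => (t.map natDegree).sum = i
  have hmem (m : {m : F[X] // m.Monic ∧ m ∣ g ∧ m.natDegree = i}) :
      normalizedFactors m.1 ∈ P.toFinset := by
    obtain ⟨m, hm, hdvd, hdeg⟩ := m
    have hle : normalizedFactors m ≤ normalizedFactors g :=
      (dvd_iff_normalizedFactors_le_normalizedFactors hm.ne_zero hg).mp hdvd
    have hfac_deg (p) (hp : p ∈ normalizedFactors m) : p.natDegree ≤ i :=
      hdeg ▸ natDegree_le_of_dvd (dvd_of_mem_normalizedFactors hp) hm.ne_zero
    simp only [P, Multiset.mem_toFinset, Multiset.mem_filter, Multiset.mem_powerset]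
    exact ⟨Multiset.le_filter.mpr ⟨hle, hfac_deg⟩,
      (sum_natDegree_normalizedFactors_of_monic hm).trans hdeg⟩
  have hinj : Function.Injective fun m => (⟨normalizedFactors m.1, hmem m⟩ : P.toFinset) := by
    rintro ⟨m₁, hm₁, _⟩ ⟨m₂, hm₂, _⟩ h
    rw [Subtype.mk.injEq, ← prod_normalizedFactors_of_monic hm₁,
      ← prod_normalizedFactors_of_monic hm₂]
    exact congrArg (·.1.prod) h
  calc Nat.card {m : F[X] // m.Monic ∧ m ∣ g ∧ m.natDegree = i}
      ≤ Nat.card P.toFinset := Nat.card_le_card_of_injective _ hinj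
    _ = P.toFinset.card := Nat.card_eq_finsetCard _
    _ ≤ Multiset.card P := Multiset.toFinset_card_le _
    _ = _ := by
      rw [Multiset.filter_map, Multiset.powerset_map, Multiset.filter_map, Multiset.card_map]
      rfl

end Polynomial

open UniqueFactorizationMonoid in
theorem count_divisors_le_coeff_general {F : Type*} [Field F] [DecidableEq F]
    (k i : ℕ)
    (g : Polynomial F) (hgm : g.Monic)
    (lam : ℕ → ℕ)
    (hlam : ∀ j, lam j =
      Multiset.card ((normalizedFactors g).filter (fun p => p.natDegree = j)))
    (hkleast : ∀ j, 0 < lam j → k ≤ j) :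
    (Nat.card {m : Polynomial F // m.Monic ∧ m ∣ g ∧ m.natDegree = i} : ℤ)
      ≤ (∏ j ∈ Finset.Icc k i, ((1 + Polynomial.X ^ j) ^ lam j : Polynomial ℤ)).coeff i := by
  set d := (normalizedFactors g).map natDegree
  have hlam_count (j : ℕ) : lam j = d.count j := by
    simp only [hlam, d, Multiset.count_map, eq_comm]
  have hsupp : (d.filter (· ≤ i)).toFinset ⊆ Finset.Icc k i := by
    intro j hj
    rw [Multiset.mem_toFinset, Multiset.mem_filter] at hj
    exact Finset.mem_Icc.mpr ⟨hkleast j (hlam_count j ▸ Multiset.count_pos.mpr hj.1), hj.2⟩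
  calc (Nat.card {m : F[X] // m.Monic ∧ m ∣ g ∧ m.natDegree = i} : ℤ)
      ≤ Multiset.card ((d.filter (· ≤ i)).powerset.filter (·.sum = i)) :=
        mod_cast card_monic_dvd_natDegree_eq_le hgm.ne_zero i
    _ = (((d.filter (· ≤ i)).map fun j => (1 + X ^ j : ℤ[X])).prod).coeff i :=
        (coeff_multiset_prod_one_add_X_pow _ i).symm
    _ = _ := by
      rw [Finset.prod_multiset_map_count_of_subset _ _ hsupp]
      refine congrArg (coeff · i) (Finset.prod_congr rfl fun j hj => ?_)
      rw [Multiset.count_filter, if_pos (Finset.mem_Icc.mp hj).2, hlam_count]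

open UniqueFactorizationMonoid in
/-- Let `g` be monic of degree `e` with factorization pattern `(λ₁,…,λ_e)` (irreducible
factors counted with multiplicity) and `k` the least index with `λ_k > 0`.  Then for
`k ≤ i ≤ e`, the number `η_i` of distinct monic divisors of `g` of degree `i` is at most
the coefficient of `X^i` in `Π_{j=k}^{i} (1+X^j)^{λ_j} ∈ ℤ[X]`. -/
theorem count_divisors_le_coeff {F : Type*} [Field F] [DecidableEq F]
    (e k i : ℕ)
    (g : Polynomial F) (hgm : g.Monic) (hge : g.natDegree = e)
    (lam : ℕ → ℕ)
    (hlam : ∀ j, lam j =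
      Multiset.card ((normalizedFactors g).filter (fun p => p.natDegree = j)))
    (hk : 0 < lam k) (hkleast : ∀ j, 0 < lam j → k ≤ j)
    (hki : k ≤ i) (hie : i ≤ e) :
    (Nat.card {m : Polynomial F // m.Monic ∧ m ∣ g ∧ m.natDegree = i} : ℤ)
      ≤ (∏ j ∈ Finset.Icc k i, ((1 + Polynomial.X ^ j) ^ lam j : Polynomial ℤ)).coeff i :=
  count_divisors_le_coeff_general k i g hgm lam hlam hkleast
end
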